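/- arXiv:2411.13286 — 4 statements merged into one kernel-verified Lean document; each statement's English description precedes it below -/
import Mathlib

section
/- Let A be an invertible 2×2 real matrix with positive determinant, and let v be a unit vector in R^2. If t is the angle parameter of v and τ(t) the angle of Av/‖Av‖, then the derivative of τ with respect to t equals det(A)/‖Av‖². -/
/-- For an invertible 2×2 real matrix `A` with positive determinant, writing
`A (cos t, sin t) = l(t) (cos τ(t), sin τ(t))` with `l t > 0`, the derivative of the angle
function `τ` satisfies `τ'(t) = det A / ‖A v‖² = det A / (l t)²`. -/
theorem stmt_0
    (A : Matrix (Fin 2) (Fin 2) ℝ) (hA : IsUnit A.det) (hdet : 0 < A.det)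
    (l τ : ℝ → ℝ) (hl : ∀ t, 0 < l t)
    (hdecomp : ∀ t, A.mulVec ![Real.cos t, Real.sin t]
      = l t • ![Real.cos (τ t), Real.sin (τ t)])
    (t : ℝ) (hτ : DifferentiableAt ℝ τ t) :
    deriv τ t = A.det / (l t) ^ 2 := by
  have hτ' : HasDerivAt τ (deriv τ t) t := hτ.hasDerivAt
  have h1 : ∀ s, l s * Real.cos (τ s) = A 0 0 * Real.cos s + A 0 1 * Real.sin s := by
    intro s
    have h := congrFun (hdecomp s) 0
    simpa [Matrix.mulVec, dotProduct, Fin.sum_univ_two] using h.symm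
  have h2 : ∀ s, l s * Real.sin (τ s) = A 1 0 * Real.cos s + A 1 1 * Real.sin s := by
    intro s
    have h := congrFun (hdecomp s) 1
    simpa [Matrix.mulVec, dotProduct, Fin.sum_univ_two] using h.symm
  have hleq : ∀ s, l s = (A 0 0 * Real.cos s + A 0 1 * Real.sin s) * Real.cos (τ s)
      + (A 1 0 * Real.cos s + A 1 1 * Real.sin s) * Real.sin (τ s) := by
    intro s
    rw [← h1, ← h2]
    have hp := Real.sin_sq_add_cos_sq (τ s)
    linear_combination (-(l s)) * hp
  have hcos : HasDerivAt (fun s => Real.cos (τ s)) (-Real.sin (τ t) * deriv τ t) t :=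
    (Real.hasDerivAt_cos (τ t)).comp t hτ'
  have hsin : HasDerivAt (fun s => Real.sin (τ s)) (Real.cos (τ t) * deriv τ t) t :=
    (Real.hasDerivAt_sin (τ t)).comp t hτ'
  have hf1 : HasDerivAt (fun s => A 0 0 * Real.cos s + A 0 1 * Real.sin s)
      (A 0 0 * (-Real.sin t) + A 0 1 * Real.cos t) t :=
    ((Real.hasDerivAt_cos t).const_mul (A 0 0)).add
      ((Real.hasDerivAt_sin t).const_mul (A 0 1))
  have hf2 : HasDerivAt (fun s => A 1 0 * Real.cos s + A 1 1 * Real.sin s)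
      (A 1 0 * (-Real.sin t) + A 1 1 * Real.cos t) t :=
    ((Real.hasDerivAt_cos t).const_mul (A 1 0)).add
      ((Real.hasDerivAt_sin t).const_mul (A 1 1))
  obtain ⟨l', hL⟩ : ∃ l', HasDerivAt l l' t :=
    ⟨_, ((hf1.mul hcos).add (hf2.mul hsin)).congr_of_eventuallyEq
      (Filter.Eventually.of_forall hleq)⟩
  have hg1 : HasDerivAt (fun s => l s * Real.cos (τ s))
      (l' * Real.cos (τ t) + l t * (-Real.sin (τ t) * deriv τ t)) t := hL.mul hcos
  have hg2 : HasDerivAt (fun s => l s * Real.sin (τ s))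
      (l' * Real.sin (τ t) + l t * (Real.cos (τ t) * deriv τ t)) t := hL.mul hsin
  have he1 : (fun s => l s * Real.cos (τ s))
      = fun s => A 0 0 * Real.cos s + A 0 1 * Real.sin s := funext h1
  have he2 : (fun s => l s * Real.sin (τ s))
      = fun s => A 1 0 * Real.cos s + A 1 1 * Real.sin s := funext h2
  rw [he1] at hg1
  rw [he2] at hg2
  have eq1 := hg1.unique hf1
  have eq2 := hg2.unique hf2
  have pyt : Real.sin t ^ 2 + Real.cos t ^ 2 = 1 := Real.sin_sq_add_cos_sq t
  have pyτ : Real.sin (τ t) ^ 2 + Real.cos (τ t) ^ 2 = 1 := Real.sin_sq_add_cos_sq (τ t)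
  rw [Matrix.det_fin_two, eq_div_iff (pow_ne_zero 2 (hl t).ne')]
  linear_combination (-Real.sin (τ t) * l t) * eq1 + (Real.cos (τ t) * l t) * eq2
    - (l t ^ 2 * deriv τ t) * pyτ + (A 0 0 * A 1 1 - A 0 1 * A 1 0) * pyt
    + (A 0 0 * Real.sin t - A 0 1 * Real.cos t) * (h2 t)
    - (A 1 0 * Real.sin t - A 1 1 * Real.cos t) * (h1 t)
end

section
/- Let A be a 2×2 matrix with singular values a ≥ b > 0, and for a unit vector v at angle t write Av = l(t)(cos τ(t), sin τ(t)). Then the first projective derivative satisfies dτ/dt ≤ a/b, i.e., dτ/dt is bounded by the condition number ‖A‖·‖A⁻¹‖ of A. -/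
/-!
The curve `γ u = A (cos u, sin u)` satisfies `γ × γ' = det A · (v × v') = det A = a b`. Written in
polar form `γ = l (cos τ, sin τ)`, the same cross product is `l² τ'`. Since the smallest singular
value bounds `l = |A v|` from below by `b`, we get `τ' = a b / l² ≤ a b / b² = a / b`.
-/

noncomputable def rot (θ : ℝ) : Matrix (Fin 2) (Fin 2) ℝ :=
  !![Real.cos θ, -Real.sin θ; Real.sin θ, Real.cos θ]

open Real Matrix

theorem cross_eq_sq_mul_of_polar {x y l τ : ℝ → ℝ} {x' y' τ' t : ℝ}
    (hx : HasDerivAt x x' t) (hy : HasDerivAt y y' t) (hτ : HasDerivAt τ τ' t)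
    (hxl : ∀ u, x u = l u * cos (τ u)) (hyl : ∀ u, y u = l u * sin (τ u)) :
    x t * y' - y t * x' = l t ^ 2 * τ' := by
  -- Differentiating `x sin τ - y cos τ = 0` needs no differentiability of `l`.
  have hzero : (fun u => x u * sin (τ u) - y u * cos (τ u)) = fun _ => 0 := by
    funext u; rw [hxl, hyl]; ring
  have hderiv : HasDerivAt (fun u => x u * sin (τ u) - y u * cos (τ u)) _ t :=
    (hx.mul hτ.sin).sub (hy.mul hτ.cos)
  rw [hzero] at hderiv
  have h0 := hderiv.unique (hasDerivAt_const t 0)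
  rw [hxl, hyl] at h0 ⊢
  linear_combination (-l t) * h0 + l t ^ 2 * τ' * (sin_sq_add_cos_sq (τ t))

theorem mulVec_cross_mulVec (A : Matrix (Fin 2) (Fin 2) ℝ) (v w : Fin 2 → ℝ) :
    (A *ᵥ v) 0 * (A *ᵥ w) 1 - (A *ᵥ v) 1 * (A *ᵥ w) 0 = A.det * (v 0 * w 1 - v 1 * w 0) := by
  simp only [mulVec, dotProduct, Fin.sum_univ_two, det_fin_two]
  ring

theorem hasDerivAt_mulVec_cos_sin (A : Matrix (Fin 2) (Fin 2) ℝ) (i : Fin 2) (t : ℝ) :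
    HasDerivAt (fun u => (A *ᵥ ![cos u, sin u]) i) ((A *ᵥ ![-sin t, cos t]) i) t := by
  simp only [mulVec, dotProduct, Fin.sum_univ_two, cons_val_zero, cons_val_one]
  exact (((hasDerivAt_cos t).const_mul (A i 0)).add
    ((hasDerivAt_sin t).const_mul (A i 1))).congr_deriv (by ring)

theorem det_rot (θ : ℝ) : (rot θ).det = 1 := by
  simp [rot, det_fin_two, ← sq, cos_sq_add_sin_sq]

theorem rot_mulVec_cos_sin (θ u : ℝ) : rot θ *ᵥ ![cos u, sin u] = ![cos (θ + u), sin (θ + u)] := by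
  ext i; fin_cases i <;> simp [rot, cos_add, sin_add, mulVec, dotProduct, sub_eq_add_neg]

theorem rot_mulVec_sq_add_sq (θ : ℝ) (w : Fin 2 → ℝ) :
    (rot θ *ᵥ w) 0 ^ 2 + (rot θ *ᵥ w) 1 ^ 2 = w 0 ^ 2 + w 1 ^ 2 := by
  simp [rot, mulVec, dotProduct]
  linear_combination (w 0 ^ 2 + w 1 ^ 2) * cos_sq_add_sin_sq θ

theorem sq_le_mulVec_cos_sin_sq_add_sq {a b α β : ℝ} (hab : b ^ 2 ≤ a ^ 2) (u : ℝ) :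
    b ^ 2 ≤ ((rot β * !![a, 0; 0, b] * rot (-α)) *ᵥ ![cos u, sin u]) 0 ^ 2
      + ((rot β * !![a, 0; 0, b] * rot (-α)) *ᵥ ![cos u, sin u]) 1 ^ 2 := by
  rw [← mulVec_mulVec, ← mulVec_mulVec, rot_mulVec_sq_add_sq, rot_mulVec_cos_sin]
  simp [mulVec, dotProduct]
  nlinarith [sin_sq_add_cos_sq (-α + u), mul_nonneg (sub_nonneg.2 hab) (sq_nonneg (cos (-α + u)))]

theorem stmt_1_general
    (a b α β : ℝ) (hb : 0 < b) (hab : b ≤ a)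
    (A : Matrix (Fin 2) (Fin 2) ℝ)
    (hA : A = rot β * !![a, 0; 0, b] * rot (-α))
    (l τ : ℝ → ℝ)
    (hdecomp : ∀ t, A.mulVec ![Real.cos t, Real.sin t]
      = l t • ![Real.cos (τ t), Real.sin (τ t)])
    (t : ℝ) (hτ : DifferentiableAt ℝ τ t) :
    deriv τ t ≤ a / b := by
  have hx (u : ℝ) : (A *ᵥ ![cos u, sin u]) 0 = l u * cos (τ u) := by simp [hdecomp]
  have hy (u : ℝ) : (A *ᵥ ![cos u, sin u]) 1 = l u * sin (τ u) := by simp [hdecomp]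
  have hdet : A.det = a * b := by simp [hA, det_rot]
  have hcross : l t ^ 2 * deriv τ t = a * b := by
    rw [← cross_eq_sq_mul_of_polar (hasDerivAt_mulVec_cos_sin A 0 t)
      (hasDerivAt_mulVec_cos_sin A 1 t) hτ.hasDerivAt hx hy, mulVec_cross_mulVec, hdet]
    simp [← sq, cos_sq_add_sin_sq]
  have hl : b ^ 2 ≤ l t ^ 2 := by
    have := sq_le_mulVec_cos_sin_sq_add_sq (α := α) (β := β) (pow_le_pow_left₀ hb.le hab 2) t
    rw [← hA, hx, hy] at this
    linear_combination this + l t ^ 2 * sin_sq_add_cos_sq (τ t)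
  have hl0 : 0 < l t ^ 2 := (pow_pos hb 2).trans_le hl
  calc deriv τ t = a * b / l t ^ 2 := by rw [eq_div_iff hl0.ne', mul_comm, hcross]
    _ ≤ a * b / b ^ 2 :=
      div_le_div_of_nonneg_left (mul_pos (hb.trans_le hab) hb).le (pow_pos hb 2) hl
    _ = a / b := by field_simp

/-- For a 2×2 matrix with singular values `a ≥ b > 0`, the projective
derivative `dτ/dt` is bounded by the condition number `a / b`. -/
theorem stmt_1
    (a b α β : ℝ) (hb : 0 < b) (hab : b ≤ a)
    (A : Matrix (Fin 2) (Fin 2) ℝ)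
    (hA : A = rot β * !![a, 0; 0, b] * rot (-α))
    (l τ : ℝ → ℝ) (hl : ∀ t, 0 < l t)
    (hdecomp : ∀ t, A.mulVec ![Real.cos t, Real.sin t]
      = l t • ![Real.cos (τ t), Real.sin (τ t)])
    (t : ℝ) (hτ : DifferentiableAt ℝ τ t) :
    deriv τ t ≤ a / b :=
  stmt_1_general a b α β hb hab A hA l τ hdecomp t hτ
end

section
/- Let ρ̃ ∈ (0,1) and let A be the 2×2 upper-triangular matrix with diagonal entries a > 0 and ρ̃a, and upper-right entry c. If ω > |c| / (ρ̃(1 - ρ̃)a), then the inverse A⁻¹ maps the vertical cone {(x,y) : |x/y| < ω} strictly into itself: for any (x,y) with |x/y| > ω, writing (x',y') = A⁻¹(x,y), we have |x'/y'| < |x/y|. -/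
/-- For `A = [[a, c],[0, ρa]]` with `a > 0`, `ρ ∈ (0,1)`, and
`ω > |c|/(ρ(1-ρ)a)`, the inverse `A⁻¹` contracts the complement of the vertical cone:
if `|x/y| > ω` then for `(x', y') = A⁻¹ (x, y)` we have `|x'/y'| < |x/y|`. -/
theorem stmt_4 (a ρ c ω x y : ℝ) (ha : 0 < a) (hρ0 : 0 < ρ) (hρ1 : ρ < 1)
    (hω : |c| / (ρ * (1 - ρ) * a) < ω)
    (hxy : ω < |x / y|) :
    |(x / a - c * y / (ρ * a ^ 2)) / (y / (ρ * a))| < |x / y| := by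
  have h1ρ : 0 < 1 - ρ := by linarith
  have hden : 0 < ρ * (1 - ρ) * a := by positivity
  have hω0 : 0 < ω := lt_of_le_of_lt (by positivity) hω
  have hy : y ≠ 0 := by
    intro h
    simp [h] at hxy
    linarith
  have key : (x / a - c * y / (ρ * a ^ 2)) / (y / (ρ * a)) = ρ * (x / y) - c / a := by
    field_simp
  rw [key]
  set t := x / y with ht
  have h1 : |ρ * t - c / a| ≤ ρ * |t| + |c| / a := by
    calc |ρ * t - c / a| ≤ |ρ * t| + |c / a| := abs_sub _ _
    _ = ρ * |t| + |c| / a := by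
        rw [abs_mul, abs_of_pos hρ0, abs_div c a, abs_of_pos ha]
  have h2 : |c| / a < ρ * (1 - ρ) * |t| := by
    have : |c| < ω * (ρ * (1 - ρ) * a) := by
      rwa [div_lt_iff₀ hden] at hω
    have hωt : ω < |t| := hxy
    rw [div_lt_iff₀ ha]
    nlinarith
  have ht0 : 0 < |t| := lt_trans hω0 hxy
  nlinarith [sq_nonneg (1 - ρ)]
end

section
/- Let f : ℝ → ℝ be a C^r diffeomorphism (r ≥ 2) with |f'(x)| > μ for all x, where 0 < μ < 1, and with ‖f''‖_{C^{r-2}} finite. Then there exists a constant C = C(r) ≥ 1 such that ‖(f⁻¹)'‖_{C^{r-1}} < C·μ^{1-2r}·max(1, ‖f''‖_{C^{r-2}})^{r-1}. -/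
/-!
With `g = f⁻¹` and `ψ = 1 / f'` we have `g' = ψ ∘ g`, hence `g^(j+1) = φ_j ∘ g` where `φ_0 = ψ`
and `φ_{j+1} = φ_j' ψ`. Since `ψ' = -f'' ψ²`, Leibniz' rule and induction bound `ψ^(m)` by
`C μ^(-(m+1)) M^m` with `M = max 1 K`, and then `φ_j^(m)` by `C μ^(-(2j+1+m)) M^(j+m)`: every
derivative costs a factor `μ⁻¹ M` and every multiplication by `ψ` a factor `μ⁻¹`. The case
`m = 0`, `j = k - 1 ≤ r - 1` is the claim.
-/

open Finset Function

theorem norm_iteratedDeriv_mul_le_of_forall_le {𝕜 A : Type*} [NontriviallyNormedField 𝕜]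
    [NormedRing A] [NormedAlgebra 𝕜 A] {f g : 𝕜 → A} {n : ℕ} (hf : ContDiff 𝕜 n f)
    (hg : ContDiff 𝕜 n g) {T : ℝ} (x : 𝕜)
    (h : ∀ i ≤ n, ‖iteratedDeriv i f x‖ * ‖iteratedDeriv (n - i) g x‖ ≤ T) :
    ‖iteratedDeriv n (f * g) x‖ ≤ 2 ^ n * T := by
  simp only [← norm_iteratedFDeriv_eq_norm_iteratedDeriv] at h ⊢
  calc ‖iteratedFDeriv 𝕜 n (f * g) x‖
      ≤ ∑ i ∈ range (n + 1),
          (n.choose i : ℝ) * ‖iteratedFDeriv 𝕜 i f x‖ * ‖iteratedFDeriv 𝕜 (n - i) g x‖ :=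
        norm_iteratedFDeriv_mul_le hf hg x le_rfl
    _ ≤ ∑ i ∈ range (n + 1), (n.choose i : ℝ) * T := by
        refine sum_le_sum fun i hi => ?_
        rw [mul_assoc]
        gcongr
        exact h i (Nat.lt_succ_iff.mp (mem_range.mp hi))
    _ = 2 ^ n * T := by
        rw [← sum_mul, ← Nat.cast_sum, Nat.sum_range_choose, Nat.cast_pow, Nat.cast_ofNat]

def DerivBound (h : ℝ → ℝ) (n : ℕ) (c ν M : ℝ) (a b : ℕ) : Prop :=
  ∀ m ≤ n, ∀ x, |iteratedDeriv m h x| ≤ c * ν ^ (a + m) * M ^ (b + m)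

namespace DerivBound

variable {h k : ℝ → ℝ} {n : ℕ} {c c' ν M : ℝ} {a a' b b' : ℕ}

theorem mono {n' : ℕ} (hb : DerivBound h n c ν M a b) (hn : n' ≤ n) (hc : c ≤ c') (hν : 0 ≤ ν)
    (hM : 0 ≤ M) : DerivBound h n' c' ν M a b := fun m hm x =>
  (hb m (hm.trans hn) x).trans (by gcongr)

theorem neg (hb : DerivBound h n c ν M a b) : DerivBound (-h) n c ν M a b := fun m hm x => by
  simpa only [iteratedDeriv_neg, abs_neg] using hb m hm x

theorem deriv (hb : DerivBound h (n + 1) c ν M a b) :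
    DerivBound (deriv h) n c ν M (a + 1) (b + 1) := fun m hm x => by
  rw [← iteratedDeriv_succ', add_right_comm a, add_right_comm b]
  exact hb (m + 1) (by omega) x

theorem of_deriv (h0 : ∀ x, |h x| ≤ c * ν ^ a * M ^ b)
    (hb : DerivBound (_root_.deriv h) n c ν M (a + 1) (b + 1)) : DerivBound h (n + 1) c ν M a b
  | 0, _, x => by simpa using h0 x
  | m + 1, hm, x => by
    rw [iteratedDeriv_succ', ← add_assoc, ← add_assoc, add_right_comm a, add_right_comm b]
    exact hb m (by omega) x

theorem mul (hh : ContDiff ℝ n h) (hk : ContDiff ℝ n k) (hbh : DerivBound h n c ν M a b)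
    (hbk : DerivBound k n c' ν M a' b') :
    DerivBound (h * k) n (2 ^ n * (c * c')) ν M (a + a') (b + b') := by
  intro m hm x
  set T := c * c' * ν ^ (a + a' + m) * M ^ (b + b' + m)
  have hterm : ∀ i ≤ m, ‖iteratedDeriv i h x‖ * ‖iteratedDeriv (m - i) k x‖ ≤ T := by
    intro i hi
    obtain ⟨d, rfl⟩ : ∃ d, m = i + d := ⟨m - i, by omega⟩
    have hi' := hbh i (by omega) x
    calc ‖iteratedDeriv i h x‖ * ‖iteratedDeriv (i + d - i) k x‖
        ≤ (c * ν ^ (a + i) * M ^ (b + i)) * (c' * ν ^ (a' + d) * M ^ (b' + d)) := by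
          rw [Real.norm_eq_abs, Real.norm_eq_abs, Nat.add_sub_cancel_left]
          exact mul_le_mul hi' (hbk d (by omega) x) (abs_nonneg _) ((abs_nonneg _).trans hi')
      _ = T := by ring
  have hT : 0 ≤ T := (mul_nonneg (norm_nonneg _) (norm_nonneg _)).trans (hterm 0 m.zero_le)
  have hmul := norm_iteratedDeriv_mul_le_of_forall_le (hh.of_le (by exact_mod_cast hm))
    (hk.of_le (by exact_mod_cast hm)) x hterm
  rw [Real.norm_eq_abs] at hmul
  calc _ ≤ 2 ^ m * T := hmul
    _ ≤ 2 ^ n * T := by gcongr; norm_num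
    _ = _ := by ring

end DerivBound

noncomputable def invDerivConst : ℕ → ℝ
  | 0 => 1
  | n + 1 => 4 ^ n * invDerivConst n ^ 2

theorem one_le_invDerivConst : ∀ n, 1 ≤ invDerivConst n
  | 0 => le_rfl
  | n + 1 => one_le_mul_of_one_le_of_one_le (one_le_pow₀ (by norm_num))
      (one_le_pow₀ (one_le_invDerivConst n))

section InverseDerivative

variable {f : ℝ → ℝ} {μ K : ℝ}

theorem abs_inv_deriv_le (hμ : 0 < μ) (hf' : ∀ x, μ < |deriv f x|) (x : ℝ) :
    |(deriv f)⁻¹ x| ≤ μ⁻¹ := by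
  rw [Pi.inv_apply, abs_inv]
  exact inv_anti₀ hμ (hf' x).le

theorem deriv_inv_deriv (hf : Differentiable ℝ (deriv f)) (hf' : ∀ x, deriv f x ≠ 0) :
    deriv (deriv f)⁻¹ = -(deriv (deriv f) * ((deriv f)⁻¹ * (deriv f)⁻¹)) := by
  funext x
  rw [((hf x).hasDerivAt.inv (hf' x)).deriv]
  simp [div_eq_mul_inv, sq]

theorem derivBound_deriv_deriv {n : ℕ} (hμ : 0 < μ) (hμ1 : μ ≤ 1)
    (hK : ∀ k, 2 ≤ k → k ≤ n + 2 → ∀ x, |iteratedDeriv k f x| ≤ K) :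
    DerivBound (deriv (deriv f)) n 1 μ⁻¹ (max 1 K) 0 1 := by
  intro m hm x
  have hν : 1 ≤ μ⁻¹ := one_le_inv₀ hμ |>.2 hμ1
  have hM : 1 ≤ max 1 K := le_max_left _ _
  rw [← iteratedDeriv_succ', ← iteratedDeriv_succ']
  calc |iteratedDeriv (m + 1 + 1) f x| ≤ max 1 K :=
        (hK _ (by omega) (by omega) x).trans (le_max_right _ _)
    _ = 1 * 1 * max 1 K ^ 1 := by ring
    _ ≤ 1 * μ⁻¹ ^ (0 + m) * max 1 K ^ (1 + m) := by
        gcongr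
        · exact one_le_pow₀ hν
        · omega

theorem derivBound_inv_deriv {N : ℕ} (hf : ContDiff ℝ (N + 1) f) (hμ : 0 < μ) (hμ1 : μ ≤ 1)
    (hf' : ∀ x, μ < |deriv f x|) (hK : ∀ k, 2 ≤ k → k ≤ N + 1 → ∀ x, |iteratedDeriv k f x| ≤ K) :
    DerivBound (deriv f)⁻¹ N (invDerivConst N) μ⁻¹ (max 1 K) 1 0 := by
  have hν : 0 ≤ μ⁻¹ := by positivity
  have hM : 0 ≤ max 1 K := le_trans zero_le_one (le_max_left _ _)
  have hf'0 : ∀ x, deriv f x ≠ 0 := fun x => abs_pos.mp (hμ.trans (hf' x))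
  have hψ : ContDiff ℝ N (deriv f)⁻¹ := hf.deriv'.inv hf'0
  suffices ∀ n ≤ N, DerivBound (deriv f)⁻¹ n (invDerivConst n) μ⁻¹ (max 1 K) 1 0 from this N le_rfl
  intro n
  induction n with
  | zero =>
    rintro - m hm x
    obtain rfl : m = 0 := by omega
    simpa [invDerivConst] using abs_inv_deriv_le hμ hf' x
  | succ n ih =>
    intro hn
    have hψn : ContDiff ℝ n (deriv f)⁻¹ := hψ.of_le (by exact_mod_cast (by omega : n ≤ N))
    have hf'' : ContDiff ℝ n (deriv (deriv f)) :=
      (hf.of_le (by exact_mod_cast (by omega : n + 1 + 1 ≤ N + 1))).deriv'.deriv'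
    have hbψ := ih (by omega)
    have hbf'' := derivBound_deriv_deriv (n := n) hμ hμ1 fun k hk hkn => hK k hk (by omega)
    have hbd : DerivBound (deriv (deriv f)⁻¹) n (invDerivConst (n + 1)) μ⁻¹ (max 1 K) 2 1 := by
      have hdf' : Differentiable ℝ (deriv f) :=
        (hf.deriv'.of_le (by exact_mod_cast (by omega : 1 ≤ N))).differentiable one_ne_zero
      rw [deriv_inv_deriv hdf' hf'0]
      exact ((hbf''.mul hf'' (hψn.mul hψn) (hbψ.mul hψn hψn hbψ)).neg).mono le_rfl
        (le_of_eq <| by rw [invDerivConst, show (4 : ℝ) = 2 * 2 by norm_num, mul_pow]; ring) hν hM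
    refine DerivBound.of_deriv (fun x => ?_) hbd
    calc |(deriv f)⁻¹ x| ≤ μ⁻¹ := abs_inv_deriv_le hμ hf' x
      _ ≤ invDerivConst (n + 1) * μ⁻¹ ^ 1 * max 1 K ^ 0 := by
        simpa using le_mul_of_one_le_left hν (one_le_invDerivConst (n + 1))

end InverseDerivative

theorem Continuous.continuous_of_leftInverse_of_rightInverse {f g : ℝ → ℝ} (hf : Continuous f)
    (hgf : LeftInverse g f) (hfg : RightInverse g f) : Continuous g := by
  rcases hf.strictMono_of_inj hgf.injective with hmono | hanti
  · exact Monotone.continuous_of_surjective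
      (fun a b hab => hmono.le_iff_le.1 (by rwa [hfg a, hfg b])) hgf.surjective
  · have : Continuous (OrderDual.toDual ∘ g) := Monotone.continuous_of_surjective
      (fun a b hab => show g b ≤ g a from hanti.le_iff_ge.1 (by rwa [hfg a, hfg b]))
      hgf.surjective
    exact continuous_ofDual.comp this

theorem hasDerivAt_of_leftInverse_of_rightInverse {f g : ℝ → ℝ} (hf : ContDiff ℝ 1 f)
    (hf' : ∀ x, deriv f x ≠ 0) (hgf : LeftInverse g f) (hfg : RightInverse g f) (x : ℝ) :
    HasDerivAt g (deriv f (g x))⁻¹ x :=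
  ((hf.differentiable one_ne_zero) (g x)).hasDerivAt.of_local_left_inverse
    (hf.continuous.continuous_of_leftInverse_of_rightInverse hgf hfg).continuousAt (hf' _)
    (Filter.Eventually.of_forall hfg)

noncomputable def invIterDeriv (f : ℝ → ℝ) : ℕ → ℝ → ℝ
  | 0 => (deriv f)⁻¹
  | j + 1 => deriv (invIterDeriv f j) * (deriv f)⁻¹

noncomputable def invIterDerivConst (N : ℕ) (c : ℝ) : ℕ → ℝ
  | 0 => c
  | j + 1 => 2 ^ (N - (j + 1)) * (invIterDerivConst N c j * c)

section InverseIteratedDerivative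

variable {f : ℝ → ℝ} {N : ℕ} {c : ℝ}

theorem one_le_invIterDerivConst (hc : 1 ≤ c) : ∀ j, 1 ≤ invIterDerivConst N c j
  | 0 => hc
  | j + 1 => one_le_mul_of_one_le_of_one_le (one_le_pow₀ (by norm_num))
      (one_le_mul_of_one_le_of_one_le (one_le_invIterDerivConst hc j) hc)

theorem monotone_invIterDerivConst (hc : 1 ≤ c) : Monotone (invIterDerivConst N c) :=
  monotone_nat_of_le_succ fun j => by
    have hQ := one_le_invIterDerivConst (N := N) hc j
    rw [invIterDerivConst]
    calc invIterDerivConst N c j = 1 * (invIterDerivConst N c j * 1) := by ring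
      _ ≤ _ := by gcongr; exact one_le_pow₀ (by norm_num)

theorem contDiff_invIterDeriv (hf : ContDiff ℝ (N + 1) f) (hf' : ∀ x, deriv f x ≠ 0) :
    ∀ j ≤ N, ContDiff ℝ (N - j : ℕ) (invIterDeriv f j)
  | 0, _ => hf.deriv'.inv hf'
  | j + 1, hj => by
    have ih := contDiff_invIterDeriv hf hf' j (by omega)
    rw [show N - j = N - (j + 1) + 1 by omega, Nat.cast_succ] at ih
    exact ih.deriv'.mul ((hf.deriv'.inv hf').of_le (by exact_mod_cast N.sub_le (j + 1)))

theorem derivBound_invIterDeriv {ν M : ℝ} (hf : ContDiff ℝ (N + 1) f) (hf' : ∀ x, deriv f x ≠ 0)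
    (hψ : DerivBound (deriv f)⁻¹ N c ν M 1 0) (hν : 0 ≤ ν) (hM : 0 ≤ M) :
    ∀ j ≤ N, DerivBound (invIterDeriv f j) (N - j) (invIterDerivConst N c j) ν M (2 * j + 1) j
  | 0, _ => hψ
  | j + 1, hj => by
    have ih := derivBound_invIterDeriv hf hf' hψ hν hM j (by omega)
    have hφ := contDiff_invIterDeriv hf hf' j (by omega)
    rw [show N - j = N - (j + 1) + 1 by omega] at ih hφ
    rw [Nat.cast_succ] at hφ
    -- elaborated before `exact`, lest `a + a'` be unified syntactically with `2 * (j + 1) + 1`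
    have hmul := ih.deriv.mul hφ.deriv'
      ((hf.deriv'.inv hf').of_le (by exact_mod_cast N.sub_le (j + 1)))
      (hψ.mono (N.sub_le (j + 1)) le_rfl hν hM)
    exact hmul

theorem iteratedDeriv_succ_eq_invIterDeriv_comp {g : ℝ → ℝ} (hf : ContDiff ℝ (N + 1) f)
    (hf' : ∀ x, deriv f x ≠ 0) (hg : ∀ x, HasDerivAt g (deriv f (g x))⁻¹ x) :
    ∀ j ≤ N, iteratedDeriv (j + 1) g = invIterDeriv f j ∘ g
  | 0, _ => by
    rw [iteratedDeriv_one]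
    exact funext fun x => (hg x).deriv
  | j + 1, hj => by
    have hφ := (contDiff_invIterDeriv hf hf' j (by omega)).differentiable
      (by exact_mod_cast (by omega : N - j ≠ 0))
    rw [iteratedDeriv_succ, iteratedDeriv_succ_eq_invIterDeriv_comp hf hf' hg j (by omega)]
    exact funext fun x => ((hφ (g x)).hasDerivAt.comp x (hg x)).deriv

end InverseIteratedDerivative

theorem abs_iteratedDeriv_inverse_le {f g : ℝ → ℝ} {μ K : ℝ} {N : ℕ} (hμ : 0 < μ) (hμ1 : μ ≤ 1)
    (hf : ContDiff ℝ (N + 1) f) (hgf : LeftInverse g f) (hfg : RightInverse g f)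
    (hf' : ∀ x, μ < |deriv f x|) (hK : ∀ k, 2 ≤ k → k ≤ N + 1 → ∀ x, |iteratedDeriv k f x| ≤ K)
    {j : ℕ} (hj : j ≤ N) (x : ℝ) :
    |iteratedDeriv (j + 1) g x| ≤
      invIterDerivConst N (invDerivConst N) j * μ⁻¹ ^ (2 * j + 1) * max 1 K ^ j := by
  have hf'0 : ∀ x, deriv f x ≠ 0 := fun x => abs_pos.mp (hμ.trans (hf' x))
  have hg := hasDerivAt_of_leftInverse_of_rightInverse (hf.of_le le_add_self) hf'0 hgf hfg
  have hbound := derivBound_invIterDeriv hf hf'0 (derivBound_inv_deriv hf hμ hμ1 hf' hK)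
    (by positivity) (zero_le_one.trans (le_max_left 1 K)) j hj 0 (N - j).zero_le (g x)
  rw [iteratedDeriv_succ_eq_invIterDeriv_comp hf hf'0 hg j hj]
  simpa using hbound

theorem stmt_9_general (r : ℕ) :
    ∃ C : ℝ, 1 ≤ C ∧ ∀ (f g : ℝ → ℝ) (μ K : ℝ), 0 < μ → μ < 1 → 0 ≤ K →
      ContDiff ℝ (r : ℕ∞) f →
      (∀ x, g (f x) = x) → (∀ x, f (g x) = x) →
      (∀ x, μ < |deriv f x|) →
      (∀ k, 2 ≤ k → k ≤ r → ∀ x, |iteratedDeriv k f x| ≤ K) →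
      ∀ k, 1 ≤ k → k ≤ r → ∀ x,
        |iteratedDeriv k g x| < C * μ ^ ((1:ℤ) - 2 * r) * max 1 K ^ (r - 1) := by
  have hc := one_le_invDerivConst (r - 1)
  refine ⟨invIterDerivConst (r - 1) (invDerivConst (r - 1)) (r - 1) + 1,
    by linarith [one_le_invIterDerivConst (N := r - 1) hc (r - 1)], ?_⟩
  intro f g μ K hμ hμ1 _ hf hgf hfg hf' hK k hk hkr x
  obtain ⟨N, rfl⟩ : ∃ N, r = N + 1 := ⟨r - 1, by omega⟩
  obtain ⟨j, rfl⟩ : ∃ j, k = j + 1 := ⟨k - 1, by omega⟩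
  simp only [Nat.add_sub_cancel] at hc ⊢
  have hν : 1 ≤ μ⁻¹ := (one_le_inv₀ hμ).2 hμ1.le
  have hzpow : μ ^ ((1 : ℤ) - 2 * (N + 1 : ℕ)) = μ⁻¹ ^ (2 * N + 1) := by
    rw [show (1 : ℤ) - 2 * (N + 1 : ℕ) = -(2 * N + 1 : ℕ) by push_cast; ring, zpow_neg,
      zpow_natCast, inv_pow]
  rw [hzpow]
  calc |iteratedDeriv (j + 1) g x|
      ≤ invIterDerivConst N (invDerivConst N) j * μ⁻¹ ^ (2 * j + 1) * max 1 K ^ j :=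
        abs_iteratedDeriv_inverse_le hμ hμ1.le (by exact_mod_cast hf) hgf hfg hf' hK (by omega) x
    _ ≤ invIterDerivConst N (invDerivConst N) N * μ⁻¹ ^ (2 * N + 1) * max 1 K ^ N := by
        have hjN : j ≤ N := by omega
        have hQ := monotone_invIterDerivConst (N := N) hc hjN
        have hQ0 := zero_le_one.trans (one_le_invIterDerivConst (N := N) hc N)
        gcongr
        exact le_max_left 1 K
    _ < _ := by gcongr; linarith

/-- Inverse lemma: for a `C^r` diffeomorphism `f` of `ℝ` with `|f'| > μ`
(`0 < μ < 1`) and derivatives of order `2..r` bounded by `K`, the derivatives of the inverse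
`g = f⁻¹` of order `1..r` are bounded by `C · μ^{1-2r} · max(1,K)^{r-1}` with `C = C(r) ≥ 1`. -/
theorem stmt_9 (r : ℕ) (hr : 2 ≤ r) :
    ∃ C : ℝ, 1 ≤ C ∧ ∀ (f g : ℝ → ℝ) (μ K : ℝ), 0 < μ → μ < 1 → 0 ≤ K →
      ContDiff ℝ (r : ℕ∞) f →
      (∀ x, g (f x) = x) → (∀ x, f (g x) = x) →
      (∀ x, μ < |deriv f x|) →
      (∀ k, 2 ≤ k → k ≤ r → ∀ x, |iteratedDeriv k f x| ≤ K) →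
      ∀ k, 1 ≤ k → k ≤ r → ∀ x,
        |iteratedDeriv k g x| < C * μ ^ ((1:ℤ) - 2 * r) * max 1 K ^ (r - 1) :=
  stmt_9_general r
end
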